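/- arXiv:2506.19737 — 5 statements merged into one kernel-verified Lean document; each statement's English description precedes it below -/
import Mathlib

section
/- In a finite two-player game, an action a_i of player i survives the first round of iterated elimination of strictly dominated actions (i.e., a_i is not strictly dominated by any mixed action) if and only if a_i is a best reply to some probability distribution (conjecture) over the opponent's actions. -/
open Finset

/-- A probability distribution (as weights) on a finite set. -/
def IsDist {B : Type} [Fintype B] (ν : B → ℝ) : Prop :=
  (∀ b, 0 ≤ ν b) ∧ ∑ b, ν b = 1

/-- `a` is a best reply to the conjecture `ν` (weights on the co-player's actions). -/
def isBR {A B : Type} [Fintype A] [Fintype B] (u : A → B → ℝ) (ν : B → ℝ) (a : A) : Prop :=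
  ∀ a' : A, ∑ b, ν b * u a' b ≤ ∑ b, ν b * u a b

/-- `a` is strictly dominated by some mixed action. -/
def Dominated {A B : Type} [Fintype A] [Fintype B] (u : A → B → ℝ) (a : A) : Prop :=
  ∃ α : A → ℝ, IsDist α ∧ ∀ b : B, (∑ a', α a' * u a' b) > u a b

/-- One step of iterated elimination: best replies (within `S`) to conjectures on `T`. -/
def BRstep {A B : Type} [Fintype A] [Fintype B] (u : A → B → ℝ) (S : Set A) (T : Set B) :
    Set A :=
  {a | a ∈ S ∧ ∃ ν : B → ℝ, IsDist ν ∧ (∀ b, ν b ≠ 0 → b ∈ T) ∧ isBR u ν a}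

/-- `n`-rationalizability in the complete-information game. -/
def Rseq {A B : Type} [Fintype A] [Fintype B] (u1 : A → B → ℝ) (u2 : B → A → ℝ) :
    ℕ → Set A × Set B
  | 0 => (Set.univ, Set.univ)
  | n + 1 =>
    (BRstep u1 (Rseq u1 u2 n).1 (Rseq u1 u2 n).2,
     BRstep u2 (Rseq u1 u2 n).2 (Rseq u1 u2 n).1)

/-- Best replies to conjectures concentrated on `T`. -/
def Lstep {A B : Type} [Fintype A] [Fintype B] (u : A → B → ℝ) (T : Set B) : Set A :=
  {a | ∃ ν : B → ℝ, IsDist ν ∧ (∀ b, ν b ≠ 0 → b ∈ T) ∧ isBR u ν a}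

/-- The classic level-k solution under anchor `(p1, p2)`; `Lk … k` is level-`k` behavior
(meaningful for `k ≥ 1`). -/
def Lk {A B : Type} [Fintype A] [Fintype B] (u1 : A → B → ℝ) (u2 : B → A → ℝ)
    (p1 : A → ℝ) (p2 : B → ℝ) : ℕ → Set A × Set B
  | 0 => (Set.univ, Set.univ)
  | 1 => ({a | isBR u1 p2 a}, {b | isBR u2 p1 b})
  | k + 2 =>
    (Lstep u1 (Lk u1 u2 p1 p2 (k + 1)).2,
     Lstep u2 (Lk u1 u2 p1 p2 (k + 1)).1)

/-- A Ĝ-conjecture over the co-player's (level-type, action) pairs: a finitely supported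
type-marginal together with conditional action distributions. -/
structure GConj (B : Type) [Fintype B] where
  m : ℕ →₀ ℝ
  m_nonneg : ∀ t, 0 ≤ m t
  m_sum : (m.sum fun _ w => w) = 1
  cond : ℕ → B → ℝ
  cond_dist : ∀ t, IsDist (cond t)

/-- Marginal of a Ĝ-conjecture on the co-player's actions. -/
noncomputable def margAct {B : Type} [Fintype B] (μ : GConj B) : B → ℝ :=
  fun b => μ.m.sum fun t w => w * μ.cond t b

/-- (K1): conditional on the co-player being of type 0 (if deemed possible),
play follows the anchor `q`. -/
def K1 {B : Type} [Fintype B] (q : B → ℝ) (μ : GConj B) : Prop :=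
  μ.m 0 ≠ 0 → μ.cond 0 = q

/-- (K2): only co-player types strictly below `k` are deemed possible. -/
def K2 {B : Type} [Fintype B] (k : ℕ) (μ : GConj B) : Prop :=
  ∀ t, μ.m t ≠ 0 → t < k

/-- (KL): only the co-player type `k - 1` is deemed possible. -/
def KL {B : Type} [Fintype B] (k : ℕ) (μ : GConj B) : Prop :=
  ∀ t, μ.m t ≠ 0 → t = k - 1

/-- Truncation `f^k` of the level distribution `f` at `k`. -/
noncomputable def ftrunc (f : ℕ → ℝ) (k t : ℕ) : ℝ :=
  f t / ∑ t' ∈ Finset.range k, f t'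

/-- (KC): the type-marginal equals the truncation of `f` at `k`. -/
def KC {B : Type} [Fintype B] (f : ℕ → ℝ) (k : ℕ) (μ : GConj B) : Prop :=
  ∀ t < k, μ.m t = ftrunc f k t

/-- A full-support level distribution on ℕ. -/
def FullDist (f : ℕ → ℝ) : Prop :=
  (∀ t, 0 < f t) ∧ HasSum f 1

/-- One step of Δ-rationalizability for one player, under belief restrictions `Δ`
(type-0 pairs always survive, since type-0 payoffs are constant). -/
def Dstep {A B : Type} [Fintype A] [Fintype B] (u : A → B → ℝ)
    (Δ : ℕ → GConj B → Prop) (S : Set (ℕ × A)) (T : Set (ℕ × B)) : Set (ℕ × A) :=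
  {x | x ∈ S ∧ (x.1 = 0 ∨ ∃ μ : GConj B, Δ x.1 μ ∧
      (∀ t b, μ.m t ≠ 0 → μ.cond t b ≠ 0 → (t, b) ∈ T) ∧ isBR u (margAct μ) x.2)}

/-- Δ-rationalizability in the derived game with payoff uncertainty. -/
def DeltaRat {A B : Type} [Fintype A] [Fintype B] (u1 : A → B → ℝ) (u2 : B → A → ℝ)
    (Δ1 : ℕ → GConj B → Prop) (Δ2 : ℕ → GConj A → Prop) :
    ℕ → Set (ℕ × A) × Set (ℕ × B)
  | 0 => (Set.univ, Set.univ)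
  | n + 1 =>
    (Dstep u1 Δ1 (DeltaRat u1 u2 Δ1 Δ2 n).1 (DeltaRat u1 u2 Δ1 Δ2 n).2,
     Dstep u2 Δ2 (DeltaRat u1 u2 Δ1 Δ2 n).2 (DeltaRat u1 u2 Δ1 Δ2 n).1)

/-- Belief restrictions for downward rationalizability: (K1) and (K2). -/
def DownR {B : Type} [Fintype B] (q : B → ℝ) : ℕ → GConj B → Prop :=
  fun k μ => K1 q μ ∧ K2 k μ

/-- Belief restrictions for L-rationalizability: (K1), (K2) and (KL). -/
def LR {B : Type} [Fintype B] (q : B → ℝ) : ℕ → GConj B → Prop :=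
  fun k μ => K1 q μ ∧ K2 k μ ∧ KL k μ

/-- Belief restrictions for C-rationalizability: (K1), (K2) and (KC). -/
def CR {B : Type} [Fintype B] (q : B → ℝ) (f : ℕ → ℝ) : ℕ → GConj B → Prop :=
  fun k μ => K1 q μ ∧ K2 k μ ∧ KC f k μ

section Sets

variable {A B : Type} [Fintype A] [Fintype B]

/-- `n`-downward-rationalizable actions of player 1's type `θ_{1,k}`. -/
def DSet (u1 : A → B → ℝ) (u2 : B → A → ℝ) (p1 : A → ℝ) (p2 : B → ℝ) (n k : ℕ) : Set A :=
  {a | (k, a) ∈ (DeltaRat u1 u2 (DownR p2) (DownR p1) n).1}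

/-- `n`-downward-rationalizable actions of player 2's type `θ_{2,k}`. -/
def DSet2 (u1 : A → B → ℝ) (u2 : B → A → ℝ) (p1 : A → ℝ) (p2 : B → ℝ) (n k : ℕ) : Set B :=
  {b | (k, b) ∈ (DeltaRat u1 u2 (DownR p2) (DownR p1) n).2}

def DSetInf (u1 : A → B → ℝ) (u2 : B → A → ℝ) (p1 : A → ℝ) (p2 : B → ℝ) (k : ℕ) : Set A :=
  ⋂ n, DSet u1 u2 p1 p2 n k

def DSet2Inf (u1 : A → B → ℝ) (u2 : B → A → ℝ) (p1 : A → ℝ) (p2 : B → ℝ) (k : ℕ) : Set B :=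
  ⋂ n, DSet2 u1 u2 p1 p2 n k

/-- `n`-L-rationalizable actions of player 1's type `θ_{1,k}`. -/
def LSet (u1 : A → B → ℝ) (u2 : B → A → ℝ) (p1 : A → ℝ) (p2 : B → ℝ) (n k : ℕ) : Set A :=
  {a | (k, a) ∈ (DeltaRat u1 u2 (LR p2) (LR p1) n).1}

/-- `n`-L-rationalizable actions of player 2's type `θ_{2,k}`. -/
def LSet2 (u1 : A → B → ℝ) (u2 : B → A → ℝ) (p1 : A → ℝ) (p2 : B → ℝ) (n k : ℕ) : Set B :=
  {b | (k, b) ∈ (DeltaRat u1 u2 (LR p2) (LR p1) n).2}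

def LSetInf (u1 : A → B → ℝ) (u2 : B → A → ℝ) (p1 : A → ℝ) (p2 : B → ℝ) (k : ℕ) : Set A :=
  ⋂ n, LSet u1 u2 p1 p2 n k

def LSet2Inf (u1 : A → B → ℝ) (u2 : B → A → ℝ) (p1 : A → ℝ) (p2 : B → ℝ) (k : ℕ) : Set B :=
  ⋂ n, LSet2 u1 u2 p1 p2 n k

/-- `n`-C-rationalizable actions of player 1's type `θ_{1,k}`. -/
def CSet (u1 : A → B → ℝ) (u2 : B → A → ℝ) (p1 : A → ℝ) (p2 : B → ℝ) (f : ℕ → ℝ)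
    (n k : ℕ) : Set A :=
  {a | (k, a) ∈ (DeltaRat u1 u2 (CR p2 f) (CR p1 f) n).1}

/-- `n`-C-rationalizable actions of player 2's type `θ_{2,k}`. -/
def CSet2 (u1 : A → B → ℝ) (u2 : B → A → ℝ) (p1 : A → ℝ) (p2 : B → ℝ) (f : ℕ → ℝ)
    (n k : ℕ) : Set B :=
  {b | (k, b) ∈ (DeltaRat u1 u2 (CR p2 f) (CR p1 f) n).2}

/-- The Cognitive Hierarchy solution: `CHsol … k` is CH level-`k` behavior (`k ≥ 1`). -/
def CHsol (u1 : A → B → ℝ) (u2 : B → A → ℝ) (p1 : A → ℝ) (p2 : B → ℝ) (f : ℕ → ℝ) :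
    ℕ → Set A × Set B
  | 0 => (Set.univ, Set.univ)
  | 1 => ({a | isBR u1 p2 a}, {b | isBR u2 p1 b})
  | k + 2 =>
    ({a | ∃ μ : GConj B, K2 (k + 2) μ ∧ KC f (k + 2) μ ∧ K1 p2 μ ∧
        (∀ t, 0 < t → ∀ _ : t < k + 2, ∀ b, μ.m t ≠ 0 → μ.cond t b ≠ 0 →
          b ∈ (CHsol u1 u2 p1 p2 f t).2) ∧
        isBR u1 (margAct μ) a},
     {b | ∃ μ : GConj A, K2 (k + 2) μ ∧ KC f (k + 2) μ ∧ K1 p1 μ ∧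
        (∀ t, 0 < t → ∀ _ : t < k + 2, ∀ a, μ.m t ≠ 0 → μ.cond t a ≠ 0 →
          a ∈ (CHsol u1 u2 p1 p2 f t).1) ∧
        isBR u2 (margAct μ) b})
  termination_by k => k

end Sets

/-- an action survives one round of elimination of strictly dominated
actions iff it is a best reply to some conjecture. -/
theorem undominated_iff_justifiable {A B : Type} [Fintype A] [Fintype B]
    [Nonempty A] [Nonempty B] (u : A → B → ℝ) (a : A) :
    ¬ Dominated u a ↔ ∃ ν : B → ℝ, IsDist ν ∧ isBR u ν a := by
  classical
  constructor
  · intro hnd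
    -- separation argument
    set P : Set (B → ℝ) :=
      {x | ∃ α : A → ℝ, IsDist α ∧ x = fun b => (∑ a', α a' * u a' b) - u a b} with hP
    set O : Set (B → ℝ) := {x | ∀ b, 0 < x b} with hO
    have hOopen : IsOpen O := by
      have : O = ⋂ b, {x : B → ℝ | 0 < x b} := by
        ext x; simp [O, Set.mem_iInter]
      rw [this]
      exact isOpen_iInter_of_finite fun b =>
        isOpen_lt continuous_const (continuous_apply b)
    have hOconv : Convex ℝ O := by
      intro x hx y hy s t hs ht hst
      intro b
      simp only [Pi.add_apply, Pi.smul_apply, smul_eq_mul]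
      rcases eq_or_lt_of_le hs with h | h
      · have ht1 : t = 1 := by linarith
        simp [← h, ht1]; exact hy b
      · have h1 : 0 < s * x b := mul_pos h (hx b)
        have h2 : 0 ≤ t * y b := mul_nonneg ht (hy b).le
        linarith
    have hPconv : Convex ℝ P := by
      rintro x ⟨α, hα, rfl⟩ y ⟨β, hβ, rfl⟩ s t hs ht hst
      refine ⟨fun a' => s * α a' + t * β a', ⟨fun a' => by
        have := hα.1 a'; have := hβ.1 a'; positivity, ?_⟩, ?_⟩
      · rw [Finset.sum_add_distrib, ← Finset.mul_sum, ← Finset.mul_sum, hα.2, hβ.2]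
        simpa using hst
      · funext b
        have hsum : ∑ a', (s * α a' + t * β a') * u a' b
            = s * ∑ a', α a' * u a' b + t * ∑ a', β a' * u a' b := by
          rw [Finset.mul_sum, Finset.mul_sum, ← Finset.sum_add_distrib]
          exact Finset.sum_congr rfl fun a' _ => by ring
        simp only [Pi.add_apply, Pi.smul_apply, smul_eq_mul, hsum]
        have hc' : s * u a b + t * u a b = u a b := by
          rw [← add_mul, hst, one_mul]
        linarith
    have hdisj : Disjoint O P := by
      rw [Set.disjoint_left]
      rintro x hxO ⟨α, hα, rfl⟩
      refine hnd ⟨α, hα, fun b => ?_⟩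
      have := hxO b
      simp only [Set.mem_setOf_eq] at this
      linarith
    obtain ⟨f, c0, hfO, hfP⟩ := geometric_hahn_banach_open hOconv hOopen hPconv hdisj
    -- f x = ∑ b, x b * c b
    set c : B → ℝ := fun b => f (fun j => if b = j then (1:ℝ) else 0) with hc
    have hfx : ∀ x : B → ℝ, f x = ∑ b, x b * c b := by
      intro x
      conv_lhs => rw [pi_eq_sum_univ x]
      rw [map_sum]
      exact Finset.sum_congr rfl fun b _ => by rw [map_smul]; rfl
    have hzeroP : (0 : B → ℝ) ∈ P := by
      refine ⟨fun a' => if a = a' then 1 else 0,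
        ⟨fun a' => by by_cases h : a = a' <;> simp [h], by simp⟩, ?_⟩
      funext b; simp
    have hc0le : c0 ≤ 0 := by simpa using hfP 0 hzeroP
    have hone : f (fun _ => (1:ℝ)) < c0 := hfO _ (fun b => one_pos)
    have hc0ge : 0 ≤ c0 := by
      by_contra h
      push_neg at h
      set S1 : ℝ := f (fun _ => (1:ℝ)) with hS1def
      have hS1 : S1 < 0 := lt_trans hone h
      have hS1ne : S1 ≠ 0 := hS1.ne
      set ε : ℝ := c0 / (2 * S1) with hεdef
      have hεpos : 0 < ε := div_pos_of_neg_of_neg h (by linarith)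
      have hmem : (ε • fun _ => (1:ℝ)) ∈ O := fun b => by
        simp only [Pi.smul_apply, smul_eq_mul, mul_one]; exact hεpos
      have h2 : f (ε • fun _ => (1:ℝ)) = ε * S1 := by
        rw [map_smul]; rfl
      have h3 : ε * S1 = c0 / 2 := by
        rw [hεdef]; field_simp
      have := hfO _ hmem
      rw [h2, h3] at this
      linarith
    -- f is nonpositive on the nonnegative orthant
    have hnonneg : ∀ x : B → ℝ, (∀ b, 0 ≤ x b) → f x ≤ 0 := by
      intro x hx
      by_contra h
      push_neg at h
      set S : ℝ := f (fun _ => 1) with hS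
      have key : ∀ ε : ℝ, 0 < ε → f x + ε * S < 0 := by
        intro ε hε
        have hmem : (x + ε • fun _ => (1:ℝ)) ∈ O := by
          intro b; simp only [Pi.add_apply, Pi.smul_apply, smul_eq_mul, mul_one]
          have := hx b; linarith
        have := hfO _ hmem
        rw [map_add, map_smul] at this
        have : f x + ε * S < c0 := by simpa [smul_eq_mul] using this
        linarith
      rcases le_or_gt 0 S with hS0 | hS0
      · have := key 1 one_pos; nlinarith
      · have hεpos : 0 < f x / (2 * (-S)) := div_pos h (by linarith)
        have hne : S ≠ 0 := hS0.ne
        have h2 : f x / (2 * (-S)) * S = -(f x / 2) := by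
          field_simp
        have h3 := key _ hεpos
        rw [h2] at h3
        linarith
    have hcle : ∀ b, c b ≤ 0 := by
      intro b
      have := hnonneg (fun j => if b = j then 1 else 0) (fun j => by positivity)
      simpa [hc] using this
    have hSneg : ∑ b, c b < 0 := by
      rcases lt_or_eq_of_le (hnonneg (fun _ => 1) (fun _ => zero_le_one)) with h | h
      · calc ∑ b, c b = f (fun _ => 1) := by rw [hfx]; simp
          _ < 0 := h
      · exfalso
        have hfzero : ∀ b, c b = 0 := by
          have hsum : ∑ b, c b = 0 := by rw [← h, hfx]; simp
          intro b
          have := (Finset.sum_eq_zero_iff_of_nonpos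
            (fun b _ => hcle b)).1 hsum b (Finset.mem_univ b)
          exact this
        have h1 : f (fun _ => (1:ℝ)) < c0 := hfO _ (fun b => one_pos)
        have : f (fun _ => (1:ℝ)) = 0 := by rw [hfx]; simp [hfzero]
        linarith
    set S : ℝ := ∑ b, -c b with hSdef
    have hSpos : 0 < S := by
      have : S = -∑ b, c b := by rw [hSdef, Finset.sum_neg_distrib]
      linarith
    refine ⟨fun b => -c b / S, ⟨fun b => div_nonneg (by linarith [hcle b]) hSpos.le, by
      rw [← Finset.sum_div]; exact div_self hSpos.ne'⟩, ?_⟩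
    intro a'
    -- the pure-strategy point for a' lies in P
    have hmemP : (fun b => u a' b - u a b) ∈ P := by
      refine ⟨fun a'' => if a' = a'' then 1 else 0,
        ⟨fun a'' => by by_cases h : a' = a'' <;> simp [h], by simp⟩, ?_⟩
      funext b; simp
    have hge : 0 ≤ ∑ b, (u a' b - u a b) * c b := by
      have := hfP _ hmemP
      rw [hfx] at this
      linarith
    have hkey : ∑ b, -c b / S * (u a' b - u a b) ≤ 0 := by
      have h1 : ∑ b, -c b / S * (u a' b - u a b)
          = (∑ b, -((u a' b - u a b) * c b)) / S := by
        rw [Finset.sum_div]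
        exact Finset.sum_congr rfl fun b _ => by ring
      rw [h1]
      apply div_nonpos_of_nonpos_of_nonneg _ hSpos.le
      rw [Finset.sum_neg_distrib]
      linarith
    have hexp : ∑ b, -c b / S * (u a' b - u a b)
        = (∑ b, -c b / S * u a' b) - ∑ b, -c b / S * u a b := by
      rw [← Finset.sum_sub_distrib]
      exact Finset.sum_congr rfl fun b _ => by ring
    rw [hexp] at hkey
    linarith
  · rintro ⟨ν, hν, hBR⟩ ⟨α, hα, hdom⟩
    -- a best reply cannot be strictly dominated
    obtain ⟨b0, hb0⟩ : ∃ b, 0 < ν b := by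
      by_contra h
      push_neg at h
      have : ∑ b, ν b = 0 := Finset.sum_eq_zero fun b _ => le_antisymm (h b) (hν.1 b)
      rw [hν.2] at this; norm_num at this
    have hlt : ∑ b, ν b * u a b < ∑ b, ν b * (∑ a', α a' * u a' b) := by
      apply Finset.sum_lt_sum
      · exact fun b _ => mul_le_mul_of_nonneg_left (hdom b).le (hν.1 b)
      · exact ⟨b0, Finset.mem_univ b0, (mul_lt_mul_iff_right₀ hb0).2 (hdom b0)⟩
    have hswap : ∑ b, ν b * (∑ a', α a' * u a' b)
        = ∑ a', α a' * (∑ b, ν b * u a' b) := by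
      simp_rw [Finset.mul_sum]
      rw [Finset.sum_comm]
      exact Finset.sum_congr rfl fun a' _ => Finset.sum_congr rfl fun b _ => by ring
    have hle : ∑ a', α a' * (∑ b, ν b * u a' b) ≤ ∑ b, ν b * u a b := by
      calc ∑ a', α a' * (∑ b, ν b * u a' b)
          ≤ ∑ a', α a' * (∑ b, ν b * u a b) :=
            Finset.sum_le_sum fun a' _ => mul_le_mul_of_nonneg_left (hBR a') (hα.1 a')
        _ = ∑ b, ν b * u a b := by rw [← Finset.sum_mul, hα.2, one_mul]
    rw [hswap] at hlt
    linarith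
end

section
/- For downward rationalizability, the behavior of a type θ_{i,k} stabilizes at reasoning order k: for every player i, every level k ≥ 0, and every order n ≥ k, the set of n-downward-rationalizable actions of type θ_{i,k} equals the set of k-downward-rationalizable actions of θ_{i,k}. -/
open Finset

/-!
A type `θ_{i,k}` only entertains co-player types below `k`, so whether `(θ_{i,k}, a)` survives
round `n + 1` depends on the round-`n` sets only at levels below `k`. By induction on `n`,
rounds `n` and `n + 1` therefore agree at every level `≤ n`, and nothing at level `k` is
eliminated after round `k`.
-/

section Stabilization

variable {A B : Type} [Fintype A] [Fintype B] (u1 : A → B → ℝ) (u2 : B → A → ℝ)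
  (Δ1 : ℕ → GConj B → Prop) (Δ2 : ℕ → GConj A → Prop)

theorem Dstep_mono (u : A → B → ℝ) (Δ : ℕ → GConj B → Prop)
    {S S' : Set (ℕ × A)} {T T' : Set (ℕ × B)} (hS : S ⊆ S') (hT : T ⊆ T') :
    Dstep u Δ S T ⊆ Dstep u Δ S' T' := by
  rintro x ⟨hxS, h0 | ⟨μ, hμ, hsupp, hBR⟩⟩
  · exact ⟨hS hxS, Or.inl h0⟩
  · exact ⟨hS hxS, Or.inr ⟨μ, hμ, fun t b ht hb => hT (hsupp t b ht hb), hBR⟩⟩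

theorem mem_Dstep_of_subset_below (u : A → B → ℝ) {Δ : ℕ → GConj B → Prop}
    (hΔ : ∀ k μ, Δ k μ → K2 k μ) {S S' : Set (ℕ × A)} {T T' : Set (ℕ × B)} {x : ℕ × A}
    (hx : x ∈ Dstep u Δ S T) (hxS' : x ∈ S') (hT : ∀ y ∈ T, y.1 < x.1 → y ∈ T') :
    x ∈ Dstep u Δ S' T' := by
  obtain ⟨-, h0 | ⟨μ, hμ, hsupp, hBR⟩⟩ := hx
  · exact ⟨hxS', Or.inl h0⟩
  · exact ⟨hxS', Or.inr ⟨μ, hμ,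
      fun t b ht hb => hT _ (hsupp t b ht hb) (hΔ _ μ hμ t ht), hBR⟩⟩

theorem DeltaRat_succ_subset (n : ℕ) :
    (DeltaRat u1 u2 Δ1 Δ2 (n + 1)).1 ⊆ (DeltaRat u1 u2 Δ1 Δ2 n).1 ∧
      (DeltaRat u1 u2 Δ1 Δ2 (n + 1)).2 ⊆ (DeltaRat u1 u2 Δ1 Δ2 n).2 := by
  induction n with
  | zero => exact ⟨Set.subset_univ _, Set.subset_univ _⟩
  | succ n ih => exact ⟨Dstep_mono _ _ ih.1 ih.2, Dstep_mono _ _ ih.2 ih.1⟩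

variable {Δ1 Δ2}

theorem DeltaRat_mem_succ_of_le (hΔ1 : ∀ k μ, Δ1 k μ → K2 k μ)
    (hΔ2 : ∀ k μ, Δ2 k μ → K2 k μ) (n : ℕ) :
    (∀ x ∈ (DeltaRat u1 u2 Δ1 Δ2 n).1, x.1 ≤ n → x ∈ (DeltaRat u1 u2 Δ1 Δ2 (n + 1)).1) ∧
      ∀ y ∈ (DeltaRat u1 u2 Δ1 Δ2 n).2, y.1 ≤ n → y ∈ (DeltaRat u1 u2 Δ1 Δ2 (n + 1)).2 := by
  induction n with
  | zero =>
    exact ⟨fun x _ hx => ⟨trivial, Or.inl (Nat.le_zero.mp hx)⟩,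
      fun y _ hy => ⟨trivial, Or.inl (Nat.le_zero.mp hy)⟩⟩
  | succ n ih =>
    exact ⟨fun x hx _ => mem_Dstep_of_subset_below u1 hΔ1 hx hx
        fun y hy hlt => ih.2 y hy (by omega),
      fun y hy _ => mem_Dstep_of_subset_below u2 hΔ2 hy hy
        fun x hx hlt => ih.1 x hx (by omega)⟩

theorem DeltaRat_level_stable (hΔ1 : ∀ k μ, Δ1 k μ → K2 k μ)
    (hΔ2 : ∀ k μ, Δ2 k μ → K2 k μ) {k n : ℕ} (hn : k ≤ n) :
    Prod.mk k ⁻¹' (DeltaRat u1 u2 Δ1 Δ2 n).1 = Prod.mk k ⁻¹' (DeltaRat u1 u2 Δ1 Δ2 k).1 ∧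
      Prod.mk k ⁻¹' (DeltaRat u1 u2 Δ1 Δ2 n).2 = Prod.mk k ⁻¹' (DeltaRat u1 u2 Δ1 Δ2 k).2 := by
  induction n, hn using Nat.le_induction with
  | base => exact ⟨rfl, rfl⟩
  | succ n hkn ih =>
    obtain ⟨hsub1, hsub2⟩ := DeltaRat_succ_subset u1 u2 Δ1 Δ2 n
    obtain ⟨hsucc1, hsucc2⟩ := DeltaRat_mem_succ_of_le u1 u2 hΔ1 hΔ2 n
    refine ⟨Eq.trans ?_ ih.1, Eq.trans ?_ ih.2⟩
    · exact Set.Subset.antisymm (fun a ha => hsub1 ha) fun a ha => hsucc1 (k, a) ha hkn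
    · exact Set.Subset.antisymm (fun b hb => hsub2 hb) fun b hb => hsucc2 (k, b) hb hkn

end Stabilization

theorem downward_bounded_reasoning_general {A B : Type} [Fintype A] [Fintype B]
    (u1 : A → B → ℝ) (u2 : B → A → ℝ) (p1 : A → ℝ) (p2 : B → ℝ)
    (k n : ℕ) (hn : k ≤ n) :
    DSet u1 u2 p1 p2 n k = DSet u1 u2 p1 p2 k k ∧
    DSet2 u1 u2 p1 p2 n k = DSet2 u1 u2 p1 p2 k k :=
  DeltaRat_level_stable u1 u2 (fun _ _ h => h.2) (fun _ _ h => h.2) hn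

/-- downward rationalizability stabilizes at reasoning order `k`. -/
theorem downward_bounded_reasoning {A B : Type} [Fintype A] [Fintype B]
    (u1 : A → B → ℝ) (u2 : B → A → ℝ) (p1 : A → ℝ) (p2 : B → ℝ)
    (hp1 : IsDist p1) (hp2 : IsDist p2) (k n : ℕ) (hn : k ≤ n) :
    DSet u1 u2 p1 p2 n k = DSet u1 u2 p1 p2 k k ∧
    DSet2 u1 u2 p1 p2 n k = DSet2 u1 u2 p1 p2 k k :=
  downward_bounded_reasoning_general u1 u2 p1 p2 k n hn
end

section
/- Downward rationalizability is monotone in the type-level: for every player i, every order n ≥ 0, and every level k ≥ 1, the set of n-downward-rationalizable actions of type θ_{i,k} is contained in that of type θ_{i,k+1}; consequently the same inclusion holds at n = ∞ (intersection over all n). -/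
open Finset

/-! Raising a type's level only relaxes (K2), so every conjecture admissible for `θ_{i,k}` is
admissible for `θ_{i,k+1}`; an induction on the order `n` carries the inclusion through the
elimination steps, the level-`0` exemption of `Dstep` being irrelevant since `k ≥ 1`. -/

theorem DownR.mono_level {B : Type} [Fintype B] {q : B → ℝ} {k l : ℕ} (hkl : k ≤ l)
    {μ : GConj B} (h : DownR q k μ) : DownR q l μ :=
  ⟨h.1, fun t ht => (h.2 t ht).trans_le hkl⟩

section LevelMonotone

variable {A B : Type} [Fintype A] [Fintype B]

theorem mem_Dstep_succ_level {u : A → B → ℝ} {Δ : ℕ → GConj B → Prop}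
    {S : Set (ℕ × A)} {T : Set (ℕ × B)} {k : ℕ} {a : A} (hk : k ≠ 0)
    (hΔ : ∀ μ, Δ k μ → Δ (k + 1) μ) (hS : (k, a) ∈ S → (k + 1, a) ∈ S)
    (h : (k, a) ∈ Dstep u Δ S T) : (k + 1, a) ∈ Dstep u Δ S T := by
  obtain ⟨haS, hk0 | ⟨μ, hμ, hsupp, hbr⟩⟩ := h
  · exact absurd hk0 hk
  · exact ⟨hS haS, Or.inr ⟨μ, hΔ μ hμ, hsupp, hbr⟩⟩

theorem mem_DeltaRat_succ_level {u1 : A → B → ℝ} {u2 : B → A → ℝ}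
    {Δ1 : ℕ → GConj B → Prop} {Δ2 : ℕ → GConj A → Prop} {k : ℕ} (hk : k ≠ 0)
    (hΔ1 : ∀ μ, Δ1 k μ → Δ1 (k + 1) μ) (hΔ2 : ∀ μ, Δ2 k μ → Δ2 (k + 1) μ) (n : ℕ) :
    (∀ a, (k, a) ∈ (DeltaRat u1 u2 Δ1 Δ2 n).1 → (k + 1, a) ∈ (DeltaRat u1 u2 Δ1 Δ2 n).1) ∧
    (∀ b, (k, b) ∈ (DeltaRat u1 u2 Δ1 Δ2 n).2 → (k + 1, b) ∈ (DeltaRat u1 u2 Δ1 Δ2 n).2) := by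
  induction n with
  | zero => exact ⟨fun _ _ => trivial, fun _ _ => trivial⟩
  | succ n ih =>
    exact ⟨fun a => mem_Dstep_succ_level hk hΔ1 (ih.1 a),
      fun b => mem_Dstep_succ_level hk hΔ2 (ih.2 b)⟩

end LevelMonotone

theorem downward_monotone_general {A B : Type} [Fintype A] [Fintype B]
    (u1 : A → B → ℝ) (u2 : B → A → ℝ) (p1 : A → ℝ) (p2 : B → ℝ)
    (n k : ℕ) (hk : 1 ≤ k) :
    (DSet u1 u2 p1 p2 n k ⊆ DSet u1 u2 p1 p2 n (k + 1) ∧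
     DSet2 u1 u2 p1 p2 n k ⊆ DSet2 u1 u2 p1 p2 n (k + 1)) ∧
    (DSetInf u1 u2 p1 p2 k ⊆ DSetInf u1 u2 p1 p2 (k + 1) ∧
     DSet2Inf u1 u2 p1 p2 k ⊆ DSet2Inf u1 u2 p1 p2 (k + 1)) := by
  have step (m : ℕ) := mem_DeltaRat_succ_level (u1 := u1) (u2 := u2)
    (Nat.one_le_iff_ne_zero.mp hk) (fun _ => DownR.mono_level (q := p2) k.le_succ)
    (fun _ => DownR.mono_level (q := p1) k.le_succ) m
  exact ⟨step n, Set.iInter_mono fun m => (step m).1, Set.iInter_mono fun m => (step m).2⟩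

/-- downward rationalizability is monotone in the type level. -/
theorem downward_monotone {A B : Type} [Fintype A] [Fintype B]
    (u1 : A → B → ℝ) (u2 : B → A → ℝ) (p1 : A → ℝ) (p2 : B → ℝ)
    (hp1 : IsDist p1) (hp2 : IsDist p2) (n k : ℕ) (hk : 1 ≤ k) :
    (DSet u1 u2 p1 p2 n k ⊆ DSet u1 u2 p1 p2 n (k + 1) ∧
     DSet2 u1 u2 p1 p2 n k ⊆ DSet2 u1 u2 p1 p2 n (k + 1)) ∧
    (DSetInf u1 u2 p1 p2 k ⊆ DSetInf u1 u2 p1 p2 (k + 1) ∧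
     DSet2Inf u1 u2 p1 p2 k ⊆ DSet2Inf u1 u2 p1 p2 (k + 1)) :=
  downward_monotone_general u1 u2 p1 p2 n k hk
end

section
/- Robust characterization of downward rationalizability: for every player i, the set of justifiable actions R¹_i (actions surviving one round of elimination of strictly dominated actions) equals both the union over all anchors p of the intersection over all levels k ≥ 1 of the downward-rationalizable actions D^∞_{i,p}(θ_{i,k}), and the union over all anchors of the union over all levels of D^∞_{i,p}(θ_{i,k}). -/
open Finset

section Aux

variable {A B : Type} [Fintype A] [Fintype B]

lemma margAct_isDist (μ : GConj B) : IsDist (margAct μ) := by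
  constructor
  · intro b
    apply Finset.sum_nonneg
    intro t _
    exact mul_nonneg (μ.m_nonneg t) ((μ.cond_dist t).1 b)
  · have : ∑ b, margAct μ b = ∑ t ∈ μ.m.support, μ.m t * ∑ b, μ.cond t b := by
      unfold margAct Finsupp.sum
      rw [Finset.sum_comm]
      exact Finset.sum_congr rfl (fun t _ => by rw [Finset.mul_sum])
    rw [this]
    have : ∀ t ∈ μ.m.support, μ.m t * ∑ b, μ.cond t b = μ.m t := by
      intro t _
      rw [(μ.cond_dist t).2, mul_one]
    rw [Finset.sum_congr rfl this]
    exact μ.m_sum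

lemma type0_mem (u1 : A → B → ℝ) (u2 : B → A → ℝ)
    (Δ1 : ℕ → GConj B → Prop) (Δ2 : ℕ → GConj A → Prop) (n : ℕ) :
    (∀ a, (0, a) ∈ (DeltaRat u1 u2 Δ1 Δ2 n).1) ∧
    (∀ b, (0, b) ∈ (DeltaRat u1 u2 Δ1 Δ2 n).2) := by
  induction n with
  | zero => exact ⟨fun _ => trivial, fun _ => trivial⟩
  | succ n ih => exact ⟨fun a => ⟨ih.1 a, Or.inl rfl⟩, fun b => ⟨ih.2 b, Or.inl rfl⟩⟩

/-- The conjecture concentrated on the co-player's type 0, playing `q`. -/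
noncomputable def anchorConj (q : B → ℝ) (hq : IsDist q) : GConj B where
  m := Finsupp.single 0 1
  m_nonneg := by
    intro t
    rw [Finsupp.single_apply]
    split <;> norm_num
  m_sum := by rw [Finsupp.sum_single_index rfl]
  cond := fun _ => q
  cond_dist := fun _ => hq

lemma anchorConj_m_ne_zero (q : B → ℝ) (hq : IsDist q) {t : ℕ}
    (h : (anchorConj q hq).m t ≠ 0) : t = 0 := by
  by_contra h'
  exact h (Finsupp.single_eq_of_ne' (fun e => h' e.symm))

lemma margAct_anchorConj (q : B → ℝ) (hq : IsDist q) : margAct (anchorConj q hq) = q := by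
  funext b
  show (Finsupp.single 0 (1:ℝ)).sum (fun _ w => w * q b) = q b
  rw [Finsupp.sum_single_index]
  · exact one_mul _
  · exact zero_mul _

lemma surv1 (u1 : A → B → ℝ) (u2 : B → A → ℝ) (p1 : A → ℝ) (ν : B → ℝ)
    (hν : IsDist ν) (a : A) (hbr : isBR u1 ν a) :
    ∀ n k, 1 ≤ k → (k, a) ∈ (DeltaRat u1 u2 (DownR ν) (DownR p1) n).1 := by
  intro n
  induction n with
  | zero => intro k _; trivial
  | succ n ih =>
    intro k hk
    refine ⟨ih k hk, Or.inr ⟨anchorConj ν hν, ⟨fun _ => rfl, ?_⟩, ?_, ?_⟩⟩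
    · intro t ht
      rw [anchorConj_m_ne_zero ν hν ht]
      exact hk
    · intro t b ht _
      rw [anchorConj_m_ne_zero ν hν ht]
      exact (type0_mem u1 u2 (DownR ν) (DownR p1) n).2 b
    · rw [margAct_anchorConj]; exact hbr

lemma surv2 (u1 : A → B → ℝ) (u2 : B → A → ℝ) (p2 : B → ℝ) (ν : A → ℝ)
    (hν : IsDist ν) (b : B) (hbr : isBR u2 ν b) :
    ∀ n k, 1 ≤ k → (k, b) ∈ (DeltaRat u1 u2 (DownR p2) (DownR ν) n).2 := by
  intro n
  induction n with
  | zero => intro k _; trivial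
  | succ n ih =>
    intro k hk
    refine ⟨ih k hk, Or.inr ⟨anchorConj ν hν, ⟨fun _ => rfl, ?_⟩, ?_, ?_⟩⟩
    · intro t ht
      rw [anchorConj_m_ne_zero ν hν ht]
      exact hk
    · intro t a ht _
      rw [anchorConj_m_ne_zero ν hν ht]
      exact (type0_mem u1 u2 (DownR p2) (DownR ν) n).1 a
    · rw [margAct_anchorConj]; exact hbr

open Classical in
lemma pointMass_isDist (a : A) : IsDist (fun a' => if a' = a then (1:ℝ) else 0) := by
  constructor
  · intro a'; dsimp only; split <;> norm_num
  · simp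

end Aux

/-- robust characterization of downward rationalizability: the justifiable
actions equal the union over all anchors of the intersection (equivalently, the union)
over all levels `k ≥ 1` of the downward-rationalizable actions. -/
theorem downward_robust_characterization {A B : Type} [Fintype A] [Fintype B]
    (u1 : A → B → ℝ) (u2 : B → A → ℝ) :
    ((Rseq u1 u2 1).1 =
      {a | ∃ p1 : A → ℝ, ∃ p2 : B → ℝ, IsDist p1 ∧ IsDist p2 ∧
        ∀ k, 1 ≤ k → a ∈ DSetInf u1 u2 p1 p2 k} ∧
     (Rseq u1 u2 1).1 =
      {a | ∃ p1 : A → ℝ, ∃ p2 : B → ℝ, IsDist p1 ∧ IsDist p2 ∧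
        ∃ k, 1 ≤ k ∧ a ∈ DSetInf u1 u2 p1 p2 k}) ∧
    ((Rseq u1 u2 1).2 =
      {b | ∃ p1 : A → ℝ, ∃ p2 : B → ℝ, IsDist p1 ∧ IsDist p2 ∧
        ∀ k, 1 ≤ k → b ∈ DSet2Inf u1 u2 p1 p2 k} ∧
     (Rseq u1 u2 1).2 =
      {b | ∃ p1 : A → ℝ, ∃ p2 : B → ℝ, IsDist p1 ∧ IsDist p2 ∧
        ∃ k, 1 ≤ k ∧ b ∈ DSet2Inf u1 u2 p1 p2 k}) := by
  have imp1 : ∀ a : A, a ∈ (Rseq u1 u2 1).1 →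
      ∃ p1 : A → ℝ, ∃ p2 : B → ℝ, IsDist p1 ∧ IsDist p2 ∧
        ∀ k, 1 ≤ k → a ∈ DSetInf u1 u2 p1 p2 k := by
    classical
    intro a ha
    have ha' : a ∈ BRstep u1 Set.univ Set.univ := ha
    obtain ⟨-, ν, hν, -, hbr⟩ := ha'
    refine ⟨fun a' => if a' = a then (1:ℝ) else 0, ν, pointMass_isDist a, hν, ?_⟩
    intro k hk
    apply Set.mem_iInter.mpr
    intro n
    exact surv1 u1 u2 _ ν hν a hbr n k hk
  have imp2 : ∀ a : A, (∃ p1 : A → ℝ, ∃ p2 : B → ℝ, IsDist p1 ∧ IsDist p2 ∧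
      ∃ k, 1 ≤ k ∧ a ∈ DSetInf u1 u2 p1 p2 k) → a ∈ (Rseq u1 u2 1).1 := by
    rintro a ⟨p1, p2, hp1, hp2, k, hk, h⟩
    have h1 : a ∈ DSet u1 u2 p1 p2 1 k := Set.mem_iInter.mp h 1
    have h1' : (k, a) ∈ Dstep u1 (DownR p2) Set.univ Set.univ := h1
    obtain ⟨-, h2⟩ := h1'
    rcases h2 with h0 | ⟨μ, -, -, hbr⟩
    · omega
    · exact ⟨trivial, margAct μ, margAct_isDist μ, fun _ _ => trivial, hbr⟩
  have imp1' : ∀ b : B, b ∈ (Rseq u1 u2 1).2 →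
      ∃ p1 : A → ℝ, ∃ p2 : B → ℝ, IsDist p1 ∧ IsDist p2 ∧
        ∀ k, 1 ≤ k → b ∈ DSet2Inf u1 u2 p1 p2 k := by
    classical
    intro b hb
    have hb' : b ∈ BRstep u2 Set.univ Set.univ := hb
    obtain ⟨-, ν, hν, -, hbr⟩ := hb'
    refine ⟨ν, fun b' => if b' = b then (1:ℝ) else 0, hν, pointMass_isDist b, ?_⟩
    intro k hk
    apply Set.mem_iInter.mpr
    intro n
    exact surv2 u1 u2 _ ν hν b hbr n k hk
  have imp2' : ∀ b : B, (∃ p1 : A → ℝ, ∃ p2 : B → ℝ, IsDist p1 ∧ IsDist p2 ∧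
      ∃ k, 1 ≤ k ∧ b ∈ DSet2Inf u1 u2 p1 p2 k) → b ∈ (Rseq u1 u2 1).2 := by
    rintro b ⟨p1, p2, hp1, hp2, k, hk, h⟩
    have h1 : b ∈ DSet2 u1 u2 p1 p2 1 k := Set.mem_iInter.mp h 1
    have h1' : (k, b) ∈ Dstep u2 (DownR p1) Set.univ Set.univ := h1
    obtain ⟨-, h2⟩ := h1'
    rcases h2 with h0 | ⟨μ, -, -, hbr⟩
    · omega
    · exact ⟨trivial, margAct μ, margAct_isDist μ, fun _ _ => trivial, hbr⟩
  refine ⟨⟨?_, ?_⟩, ?_, ?_⟩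
  · ext a
    exact ⟨fun h => imp1 a h,
      fun ⟨p1, p2, h1, h2, h⟩ => imp2 a ⟨p1, p2, h1, h2, 1, le_rfl, h 1 le_rfl⟩⟩
  · ext a
    refine ⟨fun h => ?_, imp2 a⟩
    obtain ⟨p1, p2, h1, h2, hh⟩ := imp1 a h
    exact ⟨p1, p2, h1, h2, 1, le_rfl, hh 1 le_rfl⟩
  · ext b
    exact ⟨fun h => imp1' b h,
      fun ⟨p1, p2, h1, h2, h⟩ => imp2' b ⟨p1, p2, h1, h2, 1, le_rfl, h 1 le_rfl⟩⟩
  · ext b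
    refine ⟨fun h => ?_, imp2' b⟩
    obtain ⟨p1, p2, h1, h2, hh⟩ := imp1' b h
    exact ⟨p1, p2, h1, h2, 1, le_rfl, hh 1 le_rfl⟩
end

section
/- L-rationalizability stabilizes at the type's level: for every player i, every level k ≥ 1, and every order n ≥ k, the set of n-L-rationalizable actions of type θ_{i,k} equals the set of k-L-rationalizable actions of θ_{i,k}. -/
open Finset

/-! Under (KL) a type `θ_{i,k+1}` only entertains conjectures concentrated on the co-player's
type `θ_{-i,k}`, so whether `(θ_{i,k+1}, a)` survives round `n + 1` depends only on the
level-`k` slice of the co-player at round `n`. By induction on `k`, with the two players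
exchanged at each step, the level-`k` slice no longer changes after round `k`. -/

section LRationalizability

variable {A B : Type} [Fintype A] [Fintype B]

theorem DeltaRat_swap (u1 : A → B → ℝ) (u2 : B → A → ℝ) (Δ1 : ℕ → GConj B → Prop)
    (Δ2 : ℕ → GConj A → Prop) (n : ℕ) :
    DeltaRat u2 u1 Δ2 Δ1 n = (DeltaRat u1 u2 Δ1 Δ2 n).swap := by
  induction n with
  | zero => rfl
  | succ n ih => simp only [DeltaRat, ih, Prod.fst_swap, Prod.snd_swap, Prod.swap_prod_mk]

theorem LSet2_eq_LSet (u1 : A → B → ℝ) (u2 : B → A → ℝ) (p1 : A → ℝ) (p2 : B → ℝ)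
    (n k : ℕ) : LSet2 u1 u2 p1 p2 n k = LSet u2 u1 p2 p1 n k := by
  rw [LSet, LSet2, DeltaRat_swap u1 u2, Prod.fst_swap]

theorem LSet_succ_subset (u1 : A → B → ℝ) (u2 : B → A → ℝ) (p1 : A → ℝ) (p2 : B → ℝ)
    (n k : ℕ) : LSet u1 u2 p1 p2 (n + 1) k ⊆ LSet u1 u2 p1 p2 n k :=
  fun _ ha => ha.1

theorem mem_LSet_zero_level (u1 : A → B → ℝ) (u2 : B → A → ℝ) (p1 : A → ℝ) (p2 : B → ℝ)
    (n : ℕ) (a : A) : a ∈ LSet u1 u2 p1 p2 n 0 := by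
  induction n with
  | zero => trivial
  | succ n ih => exact ⟨ih, Or.inl rfl⟩

theorem Dstep_LR_of_mem_of_level_pred {u : A → B → ℝ} {q : B → ℝ}
    {S S' : Set (ℕ × A)} {T T' : Set (ℕ × B)} {x : ℕ × A} (hS : x ∈ S')
    (hT : ∀ b, (x.1 - 1, b) ∈ T → (x.1 - 1, b) ∈ T') (hx : x ∈ Dstep u (LR q) S T) :
    x ∈ Dstep u (LR q) S' T' := by
  obtain ⟨-, hzero | ⟨μ, hμ, hsupp, hbr⟩⟩ := hx
  · exact ⟨hS, Or.inl hzero⟩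
  · refine ⟨hS, Or.inr ⟨μ, hμ, fun t b ht hb => ?_, hbr⟩⟩
    obtain rfl := hμ.2.2 t ht
    exact hT b (hsupp _ b ht hb)

theorem LSet_succ_eq_of_le (k : ℕ) (u1 : A → B → ℝ) (u2 : B → A → ℝ) (p1 : A → ℝ)
    (p2 : B → ℝ) (n : ℕ) (hkn : k ≤ n) :
    LSet u1 u2 p1 p2 (n + 1) k = LSet u1 u2 p1 p2 n k := by
  induction k generalizing A B n with
  | zero => exact Set.ext fun a => iff_of_true (mem_LSet_zero_level ..) (mem_LSet_zero_level ..)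
  | succ k ih =>
    obtain ⟨j, rfl⟩ := Nat.exists_eq_add_one_of_ne_zero (n := n) (by omega)
    have hlower : ∀ b, b ∈ LSet2 u1 u2 p1 p2 j k → b ∈ LSet2 u1 u2 p1 p2 (j + 1) k := by
      intro b hb
      rw [LSet2_eq_LSet] at hb ⊢
      rwa [ih u2 u1 p2 p1 j (by omega)]
    exact (LSet_succ_subset ..).antisymm fun a ha => Dstep_LR_of_mem_of_level_pred ha hlower ha

theorem LSet_eq_of_le (u1 : A → B → ℝ) (u2 : B → A → ℝ) (p1 : A → ℝ) (p2 : B → ℝ)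
    {k n : ℕ} (hkn : k ≤ n) : LSet u1 u2 p1 p2 n k = LSet u1 u2 p1 p2 k k := by
  induction n, hkn using Nat.le_induction with
  | base => rfl
  | succ n hkn ih => rw [LSet_succ_eq_of_le k u1 u2 p1 p2 n hkn, ih]

end LRationalizability

theorem L_bounded_reasoning_general {A B : Type} [Fintype A] [Fintype B]
    (u1 : A → B → ℝ) (u2 : B → A → ℝ) (p1 : A → ℝ) (p2 : B → ℝ)
    (k : ℕ) (n : ℕ) (hn : k ≤ n) :
    LSet u1 u2 p1 p2 n k = LSet u1 u2 p1 p2 k k ∧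
    LSet2 u1 u2 p1 p2 n k = LSet2 u1 u2 p1 p2 k k := by
  simp only [LSet2_eq_LSet]
  exact ⟨LSet_eq_of_le u1 u2 p1 p2 hn, LSet_eq_of_le u2 u1 p2 p1 hn⟩

/-- L-rationalizability stabilizes at the type's level. -/
theorem L_bounded_reasoning {A B : Type} [Fintype A] [Fintype B]
    (u1 : A → B → ℝ) (u2 : B → A → ℝ) (p1 : A → ℝ) (p2 : B → ℝ)
    (hp1 : IsDist p1) (hp2 : IsDist p2) (k : ℕ) (hk : 1 ≤ k) (n : ℕ) (hn : k ≤ n) :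
    LSet u1 u2 p1 p2 n k = LSet u1 u2 p1 p2 k k ∧
    LSet2 u1 u2 p1 p2 n k = LSet2 u1 u2 p1 p2 k k :=
  L_bounded_reasoning_general u1 u2 p1 p2 k n hn
end
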